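/- The identity B₄ = (1 − L⁵/5⁵)·(2·B₃ − (7/5)·B₂ + (2/5)·B₁ − 24/625) holds in ℂ[[x]]. -/

import Mathlib

set_option maxHeartbeats 1000000


open PowerSeries

/-- The derivation `D = x · d/dx` on `ℂ[[x]]`. -/
noncomputable def Dop (f : PowerSeries ℂ) : PowerSeries ℂ :=
  PowerSeries.X * PowerSeries.derivative ℂ f

/-- The power series `I_j = Σ_{m≥0} (−1)^m (∏_{l=0}^{m−1} (l + j/5)^5) x^{5m+j}/(5m+j)!`,
for `1 ≤ j ≤ 3`.  (The coefficient of `x^n` is nonzero only for `n ≡ j mod 5`, in which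
case `n = 5m + j` with `m = (n − j)/5`.) -/
noncomputable def Iser (j : ℕ) : PowerSeries ℂ :=
  PowerSeries.mk fun n =>
    if n % 5 = j then
      (-1 : ℂ) ^ ((n - j) / 5) *
        (∏ l ∈ Finset.range ((n - j) / 5), ((l : ℂ) + (j : ℂ) / 5) ^ 5) / (n.factorial : ℂ)
    else 0

lemma coeff_Dop (f : PowerSeries ℂ) (n : ℕ) :
    PowerSeries.coeff n (Dop f) = n * PowerSeries.coeff n f := by
  unfold Dop
  cases n with
  | zero => simp [PowerSeries.coeff_zero_eq_constantCoeff]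
  | succ n => rw [PowerSeries.coeff_succ_X_mul, PowerSeries.coeff_derivative]; push_cast; ring

lemma Dop_mul (f g : PowerSeries ℂ) : Dop (f * g) = Dop f * g + f * Dop g := by
  unfold Dop
  rw [PowerSeries.derivative ℂ |>.leibniz]
  simp [smul_eq_mul]
  ring

lemma ode1 : (1 + PowerSeries.C (1 / 5 ^ 5 : ℂ) * PowerSeries.X ^ 5) *
      Dop (Dop (Dop (Dop (Dop (Iser 1))))) =
    10 * Dop (Dop (Dop (Dop (Iser 1)))) - 35 * Dop (Dop (Dop (Iser 1)))
      + 50 * Dop (Dop (Iser 1)) - 24 * Dop (Iser 1) := by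
  ext n
  have hXp : ∀ (g : PowerSeries ℂ), PowerSeries.coeff n (PowerSeries.C ((1:ℂ) / 5 ^ 5 : ℂ) * PowerSeries.X ^ 5 * g)
      = if 5 ≤ n then (1/5^5 : ℂ) * PowerSeries.coeff (n - 5) g else 0 := by
    intro g
    rw [mul_assoc, PowerSeries.coeff_C_mul, PowerSeries.coeff_X_pow_mul' g 5 n]
    split_ifs <;> simp
  simp only [add_mul, one_mul, map_add, map_sub, hXp, coeff_Dop]
  rw [show ((10 : PowerSeries ℂ)) = PowerSeries.C (10 : ℂ) from (map_ofNat (PowerSeries.C (R := ℂ)) _).symm,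
      show ((35 : PowerSeries ℂ)) = PowerSeries.C (35 : ℂ) from (map_ofNat (PowerSeries.C (R := ℂ)) _).symm,
      show ((50 : PowerSeries ℂ)) = PowerSeries.C (50 : ℂ) from (map_ofNat (PowerSeries.C (R := ℂ)) _).symm,
      show ((24 : PowerSeries ℂ)) = PowerSeries.C (24 : ℂ) from (map_ofNat (PowerSeries.C (R := ℂ)) _).symm]
  simp only [PowerSeries.coeff_C_mul, coeff_Dop]
  by_cases h5 : 5 ≤ n
  · rw [if_pos h5]
    obtain ⟨k, rfl⟩ : ∃ k, n = k + 5 := ⟨n - 5, (Nat.sub_add_cancel h5).symm⟩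
    simp only [Nat.add_sub_cancel]
    by_cases hk : k % 5 = 1
    · obtain ⟨m, rfl⟩ : ∃ m, k = 5 * m + 1 := ⟨k / 5, by omega⟩
      push_cast
      set v := PowerSeries.coeff (5*m+1+5) (Iser 1) with hv
      set a := PowerSeries.coeff (5*m+1) (Iser 1) with ha
      set u := (m:ℂ) with hu
      have key : ∀ (j:ℕ), j ≠ 0 → 5*u + (j:ℂ) ≠ 0 := by
        intro j hj
        have h : 5*u+(j:ℂ) = ((5*m+j:ℕ):ℂ) := by push_cast; ring
        rw [h]
        exact Nat.cast_ne_zero.2 (by omega)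
      have hrec : ((5*u+2)*(5*u+3)*(5*u+4)*(5*u+5)*(5*u+6)) * v
          = -(1/5^5) * (5*u+1)^5 * a := by
        have e1 : (5 * m + 1 + 5) % 5 = 1 := by omega
        have e2 : (5 * m + 1 + 5 - 1) / 5 = m + 1 := by omega
        have e3 : (5 * m + 1 - 1) / 5 = m := by omega
        have hne : ((5*m+1).factorial : ℂ) ≠ 0 := Nat.cast_ne_zero.2 (Nat.factorial_ne_zero _)
        have hf : ((5*m+1+5).factorial : ℂ) = ((5*m+1).factorial : ℂ)
            * ((5*u+2)*(5*u+3)*(5*u+4)*(5*u+5)*(5*u+6)) := by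
          have h : (5*m+1+5).factorial
              = (5*m+1).factorial * ((5*m+2)*((5*m+3)*((5*m+4)*((5*m+5)*(5*m+6))))) := by
            simp [show 5*m+1+5 = 5*m+1+1+1+1+1+1 from rfl, Nat.factorial_succ]; ring
          rw [h]; push_cast; ring
        have hfne : ((5*m+1+5).factorial : ℂ) ≠ 0 := Nat.cast_ne_zero.2 (Nat.factorial_ne_zero _)
        rw [hv, ha]
        simp only [Iser, PowerSeries.coeff_mk, e1, e2, e3, hk, if_pos, Nat.cast_one]
        rw [Finset.prod_range_succ, hf, pow_succ]
        field_simp [hne]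
        have h5' : u + 1 ≠ 0 := by
          intro h; apply key 5 (by norm_num); push_cast; linear_combination 5 * h
        rw [neg_inj, div_eq_iff (by
          exact mul_ne_zero (mul_ne_zero (mul_ne_zero (mul_ne_zero (key 2 (by norm_num))
            (key 3 (by norm_num))) (key 4 (by norm_num))) h5')
            (key 6 (by norm_num)))]
        ring
      linear_combination hrec
    · have hk5 : (k + 5) % 5 ≠ 1 := by omega
      simp [Iser, hk, hk5]
  · rw [if_neg h5]
    interval_cases n <;> simp <;> ring


lemma coeff_one_DopIser : PowerSeries.coeff 1 (Dop (Iser 1)) = 1 := by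
  rw [coeff_Dop]
  simp [Iser]

lemma DopIser_ne : Dop (Iser 1) ≠ 0 := by
  intro h
  have := coeff_one_DopIser
  rw [h] at this
  simp at this

/-- With `B_i = 5^{−i}·(D + X₁)^{i−1} X₁` (where `(D + X₁) f = D f + X₁·f`), the identity
`B₄ = (1 − L⁵/5⁵)·(2B₃ − (7/5)B₂ + (2/5)B₁ − 24/625)` holds in `ℂ[[x]]`. -/
theorem stmt7 (L X₁ : PowerSeries ℂ)
    (hL0 : PowerSeries.constantCoeff L = 0)
    (hL1 : PowerSeries.coeff 1 L = 1)
    (hLeq : L ^ 5 * (1 + PowerSeries.C (1 / 5 ^ 5 : ℂ) * PowerSeries.X ^ 5)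
      = PowerSeries.X ^ 5)
    (hX₁ : X₁ * Dop (Iser 1) = Dop (Dop (Iser 1)))
    (T : PowerSeries ℂ → PowerSeries ℂ)
    (hT : ∀ g : PowerSeries ℂ, T g = Dop g + X₁ * g) :
    PowerSeries.C (1 / 5 ^ 4 : ℂ) * T (T (T X₁)) =
      (1 - PowerSeries.C (1 / 5 ^ 5 : ℂ) * L ^ 5) *
        (2 * (PowerSeries.C (1 / 5 ^ 3 : ℂ) * T (T X₁))
          - PowerSeries.C (7 / 5 : ℂ) * (PowerSeries.C (1 / 5 ^ 2 : ℂ) * T X₁)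
          + PowerSeries.C (2 / 5 : ℂ) * (PowerSeries.C (1 / 5 : ℂ) * X₁)
          - PowerSeries.C (24 / 625 : ℂ)) := by
  have h1 : T X₁ * Dop (Iser 1) = Dop (Dop (Dop (Iser 1))) := by
    rw [hT, ← hX₁, Dop_mul]
    linear_combination X₁ * hX₁
  have h2 : T (T X₁) * Dop (Iser 1) = Dop (Dop (Dop (Dop (Iser 1)))) := by
    rw [hT (T X₁), ← h1, Dop_mul]
    linear_combination T X₁ * hX₁
  have h3 : T (T (T X₁)) * Dop (Iser 1) = Dop (Dop (Dop (Dop (Dop (Iser 1))))) := by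
    rw [hT (T (T X₁)), ← h2, Dop_mul]
    linear_combination T (T X₁) * hX₁
  have hT3 : ((1 + PowerSeries.C (1/5^5 : ℂ) * PowerSeries.X^5) * T (T (T X₁))) * Dop (Iser 1)
      = ((10 : PowerSeries ℂ) * T (T X₁) - 35 * T X₁ + 50 * X₁ - 24) * Dop (Iser 1) := by
    linear_combination (1 + PowerSeries.C ((1:ℂ)/5^5 : ℂ) * PowerSeries.X^5) * h3 + ode1
      - 10 * h2 + 35 * h1 - 50 * hX₁
  have hODE : (1 + PowerSeries.C (1/5^5 : ℂ) * PowerSeries.X^5) * T (T (T X₁))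
      = (10 : PowerSeries ℂ) * T (T X₁) - 35 * T X₁ + 50 * X₁ - 24 :=
    mul_right_cancel₀ DopIser_ne hT3
  have hC : (1 - PowerSeries.C (1/5^5 : ℂ) * L^5) * (1 + PowerSeries.C (1/5^5 : ℂ) * PowerSeries.X^5) = 1 := by
    linear_combination (-(PowerSeries.C ((1:ℂ)/5^5 : ℂ))) * hLeq
  have hA : (2 : PowerSeries ℂ) * PowerSeries.C (1/5^3 : ℂ) = PowerSeries.C (1/5^4 : ℂ) * 10 := by
    rw [show (2 : PowerSeries ℂ) = PowerSeries.C (2 : ℂ) from (map_ofNat _ _).symm,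
        show (10 : PowerSeries ℂ) = PowerSeries.C (10 : ℂ) from (map_ofNat _ _).symm,
        ← map_mul, ← map_mul]
    norm_num
  have hB : PowerSeries.C (7/5 : ℂ) * PowerSeries.C (1/5^2 : ℂ) = PowerSeries.C (1/5^4 : ℂ) * 35 := by
    rw [show (35 : PowerSeries ℂ) = PowerSeries.C (35 : ℂ) from (map_ofNat _ _).symm,
        ← map_mul, ← map_mul]
    norm_num
  have hC2 : PowerSeries.C (2/5 : ℂ) * PowerSeries.C (1/5 : ℂ) = PowerSeries.C (1/5^4 : ℂ) * 50 := by
    rw [show (50 : PowerSeries ℂ) = PowerSeries.C (50 : ℂ) from (map_ofNat _ _).symm,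
        ← map_mul, ← map_mul]
    norm_num
  have hD : PowerSeries.C (24/625 : ℂ) = PowerSeries.C (1/5^4 : ℂ) * 24 := by
    rw [show (24 : PowerSeries ℂ) = PowerSeries.C (24 : ℂ) from (map_ofNat _ _).symm, ← map_mul]
    norm_num
  linear_combination ((1 - PowerSeries.C ((1:ℂ)/5^5 : ℂ) * L^5) * PowerSeries.C ((1:ℂ)/5^4 : ℂ)) * hODE
    - (PowerSeries.C ((1:ℂ)/5^4 : ℂ) * T (T (T X₁))) * hC
    + (-(1 - PowerSeries.C ((1:ℂ)/5^5 : ℂ) * L^5) * T (T X₁)) * hA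
    + ((1 - PowerSeries.C ((1:ℂ)/5^5 : ℂ) * L^5) * T X₁) * hB
    + (-(1 - PowerSeries.C ((1:ℂ)/5^5 : ℂ) * L^5) * X₁) * hC2
    + (1 - PowerSeries.C ((1:ℂ)/5^5 : ℂ) * L^5) * hD
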